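/- arXiv:0807.2206 — 8 statements merged into one kernel-verified Lean document; each statement's English description precedes it below -/
import Mathlib

section
/- Let H be a finite-dimensional complex inner product space and H₁,…,Hₙ subspaces with orthogonal projections P₁,…,Pₙ. If there exist real numbers a₀ ≥ 0 and a₁,…,aₙ > 0 with Σₖ aₖ Pₖ = a₀ I, and the collection of projections is irreducible (every operator X commuting with all Pₖ is scalar), then the system of subspaces (H;H₁,…,Hₙ) is brick: every linear endomorphism X of H with X(Hₖ) ⊆ Hₖ for all k is a scalar multiple of the identity. -/
/-!
Put `C_k = P_k X - X P_k`. Invariance of `H_k` under `X` means `P_k X P_k = X P_k`, so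
`C_k P_k = 0` and `P_k C_k = C_k`, which turns `tr (C_k C_k*)` into `tr (C_k X*)`. Since
`Σ a_k P_k` is scalar, `Σ a_k C_k = 0`, hence `Σ a_k tr (C_k C_k*) = tr ((Σ a_k C_k) X*) = 0`.
Every term is nonnegative and `a_k > 0`, so each `C_k` vanishes: `X` commutes with all `P_k`
and is scalar by irreducibility.
-/

open scoped ComplexOrder

namespace LinearMap

variable {𝕜 E : Type*} [RCLike 𝕜] [NormedAddCommGroup E] [InnerProductSpace 𝕜 E]
  [FiniteDimensional 𝕜 E]

theorem trace_mul_star_self_nonneg (C : E →ₗ[𝕜] E) : 0 ≤ trace 𝕜 E (C * star C) :=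
  (isPositive_self_comp_adjoint C).trace_nonneg

theorem trace_mul_star_self_eq_zero_iff (C : E →ₗ[𝕜] E) :
    trace 𝕜 E (C * star C) = 0 ↔ C = 0 := by
  refine ⟨fun h ↦ ?_, fun h ↦ by simp [h]⟩
  set b := stdOrthonormalBasis 𝕜 E
  have hsum : trace 𝕜 E (C * star C) = ∑ i, ((‖C (b i)‖ ^ 2 : ℝ) : 𝕜) := by
    rw [trace_mul_comm, trace_eq_sum_inner _ b]
    refine Finset.sum_congr rfl fun i _ ↦ ?_
    rw [Module.End.mul_apply, star_eq_adjoint, adjoint_inner_right, inner_self_eq_norm_sq_to_K]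
    norm_cast
  rw [hsum, ← RCLike.ofReal_sum, RCLike.ofReal_eq_zero,
    Finset.sum_eq_zero_iff_of_nonneg fun i _ ↦ sq_nonneg _] at h
  exact b.toBasis.ext fun i ↦ by simpa using h i (Finset.mem_univ i)

theorem trace_commutator_mul_star_commutator {P X : E →ₗ[𝕜] E} (hP : IsStarProjection P)
    (hX : P * X * P = X * P) :
    trace 𝕜 E ((P * X - X * P) * star (P * X - X * P)) =
      trace 𝕜 E ((P * X - X * P) * star X) := by
  set C := P * X - X * P
  have hCP : C * P = 0 := by rw [sub_mul, hX, mul_assoc, hP.isIdempotentElem.eq, sub_self]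
  have hPC : P * C = C := by rw [mul_sub, ← mul_assoc, hP.isIdempotentElem.eq, ← mul_assoc, hX]
  have hstar : star C = star X * P - P * star X := by
    rw [star_sub, star_mul, star_mul, hP.isSelfAdjoint.star_eq]
  calc trace 𝕜 E (C * star C)
      = trace 𝕜 E (C * star X * P) := by
        rw [hstar, mul_sub, ← mul_assoc C P, hCP, zero_mul, sub_zero, mul_assoc]
    _ = trace 𝕜 E (P * C * star X) := trace_mul_cycle ..
    _ = trace 𝕜 E (C * star X) := by rw [hPC]

theorem commute_of_commute_sum_smul_starProjection {ι : Type*} [Fintype ι]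
    {P : ι → E →ₗ[𝕜] E} (hP : ∀ k, IsStarProjection (P k)) {a : ι → ℝ} (ha : ∀ k, 0 < a k)
    {X : E →ₗ[𝕜] E} (hX : ∀ k, P k * X * P k = X * P k)
    (hcomm : Commute (∑ k, (a k : 𝕜) • P k) X) (k : ι) : Commute (P k) X := by
  set C : ι → E →ₗ[𝕜] E := fun k ↦ P k * X - X * P k with hC
  have hsum_C : ∑ k, (a k : 𝕜) • C k = 0 := by
    calc ∑ k, (a k : 𝕜) • C k
        = (∑ k, (a k : 𝕜) • P k) * X - X * ∑ k, (a k : 𝕜) • P k := by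
          simp only [hC, smul_sub, Finset.sum_sub_distrib, Finset.sum_mul, Finset.mul_sum,
            smul_mul_assoc, mul_smul_comm]
      _ = 0 := sub_eq_zero.mpr hcomm.eq
  have hsum_trace : ∑ k, (a k : 𝕜) * trace 𝕜 E (C k * star (C k)) = 0 := by
    calc ∑ k, (a k : 𝕜) * trace 𝕜 E (C k * star (C k))
        = trace 𝕜 E ((∑ k, (a k : 𝕜) • C k) * star X) := by
          simp only [hC, trace_commutator_mul_star_commutator (hP _) (hX _), Finset.sum_mul,
            map_sum, smul_mul_assoc, map_smul, smul_eq_mul]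
      _ = 0 := by rw [hsum_C, zero_mul, map_zero]
  have hnonneg (k : ι) : 0 ≤ (a k : 𝕜) * trace 𝕜 E (C k * star (C k)) :=
    mul_nonneg (RCLike.ofReal_nonneg.mpr (ha k).le) (trace_mul_star_self_nonneg _)
  have hk := (Finset.sum_eq_zero_iff_of_nonneg fun k _ ↦ hnonneg k).mp hsum_trace k
    (Finset.mem_univ k)
  rw [mul_eq_zero, RCLike.ofReal_eq_zero, trace_mul_star_self_eq_zero_iff] at hk
  exact sub_eq_zero.mp (hk.resolve_left (ha k).ne')

end LinearMap

namespace Submodule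

variable {𝕜 E : Type*} [RCLike 𝕜] [NormedAddCommGroup E] [InnerProductSpace 𝕜 E]

theorem isStarProjection_starProjection_toLinearMap [FiniteDimensional 𝕜 E]
    (U : Submodule 𝕜 E) :
    IsStarProjection (U.starProjection : E →ₗ[𝕜] E) := by
  have := FiniteDimensional.complete 𝕜 E
  exact ⟨ContinuousLinearMap.IsIdempotentElem.toLinearMap U.isIdempotentElem_starProjection,
    (ContinuousLinearMap.isSelfAdjoint_toLinearMap_iff _).mpr (isSelfAdjoint_starProjection U)⟩

theorem starProjection_mul_mul_starProjection_of_mapsTo (U : Submodule 𝕜 E)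
    [U.HasOrthogonalProjection] {X : E →ₗ[𝕜] E} (hX : ∀ x ∈ U, X x ∈ U) :
    (U.starProjection : E →ₗ[𝕜] E) * X * U.starProjection = X * U.starProjection :=
  LinearMap.ext fun x ↦ starProjection_eq_self_iff.mpr (hX _ (U.starProjection_apply_mem x))

end Submodule

theorem irreducible_orthoscalar_is_brick_general
    (H : Type*) [NormedAddCommGroup H] [InnerProductSpace ℂ H] [FiniteDimensional ℂ H]
    (n : ℕ) (Hs : Fin n → Submodule ℂ H) (a₀ : ℝ) (a : Fin n → ℝ)
    (ha : ∀ k, 0 < a k)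
    (hrel : ∑ k, (a k : ℂ) • ((Hs k).subtypeL ∘L Submodule.orthogonalProjectionOnto (Hs k))
      = (a₀ : ℂ) • ContinuousLinearMap.id ℂ H)
    (hirr : ∀ X : H →L[ℂ] H,
      (∀ k, X ∘L ((Hs k).subtypeL ∘L Submodule.orthogonalProjectionOnto (Hs k))
          = ((Hs k).subtypeL ∘L Submodule.orthogonalProjectionOnto (Hs k)) ∘L X) →
      ∃ c : ℂ, X = c • ContinuousLinearMap.id ℂ H) :
    ∀ X : H →ₗ[ℂ] H, (∀ k, ∀ x ∈ Hs k, X x ∈ Hs k) →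
      ∃ c : ℂ, X = c • LinearMap.id := by
  intro X hX
  change ∑ k, (a k : ℂ) • (Hs k).starProjection = (a₀ : ℂ) • ContinuousLinearMap.id ℂ H at hrel
  change ∀ X : H →L[ℂ] H, (∀ k, X ∘L (Hs k).starProjection = (Hs k).starProjection ∘L X) → _
    at hirr
  have hsum : ∑ k, (a k : ℂ) • ((Hs k).starProjection : H →ₗ[ℂ] H) = (a₀ : ℂ) • 1 := by
    simpa [Module.End.one_eq_id] using congrArg ContinuousLinearMap.toLinearMap hrel
  have hcomm := LinearMap.commute_of_commute_sum_smul_starProjection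
    (fun k ↦ (Hs k).isStarProjection_starProjection_toLinearMap) ha
    (fun k ↦ (Hs k).starProjection_mul_mul_starProjection_of_mapsTo (hX k))
    (hsum ▸ (Commute.one_left X).smul_left _)
  obtain ⟨c, hc⟩ := hirr (LinearMap.toContinuousLinearMap X) fun k ↦
    ContinuousLinearMap.coe_injective (hcomm k).eq.symm
  exact ⟨c, by simpa using congrArg ContinuousLinearMap.toLinearMap hc⟩

/-- an irreducible orthoscalar system of subspaces of a finite
dimensional Hilbert space is brick. -/
theorem irreducible_orthoscalar_is_brick
    (H : Type*) [NormedAddCommGroup H] [InnerProductSpace ℂ H] [FiniteDimensional ℂ H]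
    (n : ℕ) (Hs : Fin n → Submodule ℂ H) (a₀ : ℝ) (a : Fin n → ℝ)
    (ha₀ : 0 ≤ a₀) (ha : ∀ k, 0 < a k)
    (hrel : ∑ k, (a k : ℂ) • ((Hs k).subtypeL ∘L Submodule.orthogonalProjectionOnto (Hs k))
      = (a₀ : ℂ) • ContinuousLinearMap.id ℂ H)
    (hirr : ∀ X : H →L[ℂ] H,
      (∀ k, X ∘L ((Hs k).subtypeL ∘L Submodule.orthogonalProjectionOnto (Hs k))
          = ((Hs k).subtypeL ∘L Submodule.orthogonalProjectionOnto (Hs k)) ∘L X) →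
      ∃ c : ℂ, X = c • ContinuousLinearMap.id ℂ H) :
    ∀ X : H →ₗ[ℂ] H, (∀ k, ∀ x ∈ Hs k, X x ∈ Hs k) →
      ∃ c : ℂ, X = c • LinearMap.id :=
  irreducible_orthoscalar_is_brick_general H n Hs a₀ a ha hrel hirr
end

section
/- Let H be a finite-dimensional complex inner product space with subspaces H₁,…,Hₙ and orthogonal projections P₁,…,Pₙ. If the system of subspaces (H;H₁,…,Hₙ) is indecomposable as a system in the underlying linear space (every idempotent endomorphism preserving all Hₖ is 0 or I), then the collection of projections P₁,…,Pₙ is irreducible: every operator commuting with all Pₖ is a scalar multiple of the identity. -/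
/-!
The orthogonal projection `R` onto an eigenspace `E` of `X` commutes with every `Pₖ`: each `Pₖ`
preserves `E` because it commutes with `X`, and preserves `Eᗮ` because it is self-adjoint.
Hence `R` is an idempotent preserving every `Hₖ = range Pₖ`, so `R = 0` or `R = I`; as `E ≠ 0`,
`E` is all of `H` and `X` is scalar.
-/

open Module End Submodule

namespace Module.End

variable {R M : Type*} [CommRing R] [AddCommGroup M] [Module R M]

lemma eigenspace_mem_invtSubmodule_of_commute {f g : End R M} (h : Commute f g) (μ : R) :
    f.eigenspace μ ∈ g.invtSubmodule :=
  mapsTo_genEigenspace_of_comm h μ 1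

lemma eq_smul_one_of_eigenspace_eq_top {f : End R M} {μ : R} (h : f.eigenspace μ = ⊤) :
    f = μ • 1 := by
  ext x
  exact mem_eigenspace_iff.mp (h ▸ mem_top)

end Module.End

section

variable {𝕜 E : Type*} [RCLike 𝕜] [NormedAddCommGroup E] [InnerProductSpace 𝕜 E]

lemma LinearMap.IsSymmetric.commute_starProjection {T : End 𝕜 E} (hT : T.IsSymmetric)
    {K : Submodule 𝕜 E} [K.HasOrthogonalProjection] (hK : K ∈ T.invtSubmodule) :
    Commute (K.starProjection : End 𝕜 E) T := by
  rw [LinearMap.IsIdempotentElem.commute_iff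
    (isSymmetricProjection_starProjection K).isIdempotentElem]
  simpa using ⟨hK, hT.orthogonalComplement_mem_invtSubmodule hK⟩

lemma Submodule.mem_invtSubmodule_starProjection_eigenspace {X : End 𝕜 E} {K : Submodule 𝕜 E}
    [K.HasOrthogonalProjection] (hX : Commute (K.starProjection : End 𝕜 E) X) (μ : 𝕜)
    [(X.eigenspace μ).HasOrthogonalProjection] :
    K ∈ invtSubmodule ((X.eigenspace μ).starProjection : End 𝕜 E) := by
  have hP := isSymmetricProjection_starProjection K
  have hcomm := hP.isSymmetric.commute_starProjection
    (eigenspace_mem_invtSubmodule_of_commute hX.symm μ)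
  simpa using ((LinearMap.IsIdempotentElem.commute_iff hP.isIdempotentElem).mp hcomm.symm).1

end

/-- indecomposability of a system of subspaces of a Hilbert space
implies irreducibility of the family of orthogonal projections. -/
theorem indecomposable_implies_irreducible
    (H : Type*) [NormedAddCommGroup H] [InnerProductSpace ℂ H] [FiniteDimensional ℂ H]
    (n : ℕ) (Hs : Fin n → Submodule ℂ H)
    (hindec : ∀ R : H →ₗ[ℂ] H, R ∘ₗ R = R → (∀ k, ∀ x ∈ Hs k, R x ∈ Hs k) →
      R = 0 ∨ R = LinearMap.id) :
    ∀ X : H →L[ℂ] H,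
      (∀ k, X ∘L ((Hs k).subtypeL ∘L (Hs k).orthogonalProjectionOnto)
          = ((Hs k).subtypeL ∘L (Hs k).orthogonalProjectionOnto) ∘L X) →
      ∃ c : ℂ, X = c • ContinuousLinearMap.id ℂ H := by
  intro X hX
  cases subsingleton_or_nontrivial H
  · exact ⟨0, Subsingleton.elim _ _⟩
  obtain ⟨c, hc⟩ := exists_eigenvalue (X : End ℂ H)
  have hcomm (k : Fin n) : Commute ((Hs k).starProjection : End ℂ H) X :=
    (congrArg ContinuousLinearMap.toLinearMap (hX k)).symm
  rcases hindec _
    (isSymmetricProjection_starProjection (eigenspace (X : End ℂ H) c)).isIdempotentElem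
    (fun k => (Hs k).mem_invtSubmodule_starProjection_eigenspace (hcomm k) c) with h0 | hid
  · refine absurd (starProjection_inj.mp ?_) hc
    rw [starProjection_bot]
    exact ContinuousLinearMap.coe_injective h0
  · have hE : eigenspace (X : End ℂ H) c = ⊤ := by
      refine starProjection_inj.mp ?_
      rw [starProjection_top]
      exact ContinuousLinearMap.coe_injective hid
    refine ⟨c, ContinuousLinearMap.coe_injective ?_⟩
    simpa [one_eq_id] using eq_smul_one_of_eigenspace_eq_top hE
end

section
/- The brick triple (ℂ²; ℂ(1,0), ℂ(0,1), ℂ(1,1)) can be unitarized with character (a₀;a₁,a₂,a₃) if and only if 0 < aᵢ < a₀ for i = 1,2,3 and 2a₀ = a₁ + a₂ + a₃. That is, there exists an inner product on ℂ² with orthogonal projections P₁,P₂,P₃ onto the three lines satisfying a₁P₁ + a₂P₂ + a₃P₃ = a₀I exactly under these conditions. -/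
/-- The system of subspaces `Vs` of the complex vector space `V` can be
unitarized with character `(a₀; a)`: there is a (positive definite hermitian)
inner product `B` on `V` such that the `B`-orthogonal projections `P i` onto
the subspaces `Vs i` satisfy `∑ i, a i • P i = a₀ • I`. -/
def Unitarizable {V : Type*} [AddCommGroup V] [Module ℂ V] {n : ℕ}
    (Vs : Fin n → Submodule ℂ V) (a₀ : ℝ) (a : Fin n → ℝ) : Prop :=
  ∃ (B : V → V → ℂ) (P : Fin n → V →ₗ[ℂ] V),
    (∀ x y z, B (x + y) z = B x z + B y z) ∧
    (∀ (c : ℂ) (x y : V), B (c • x) y = (starRingEnd ℂ) c * B x y) ∧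
    (∀ x y, B x y = (starRingEnd ℂ) (B y x)) ∧
    (∀ x, x ≠ 0 → 0 < (B x x).re) ∧
    (∀ i, LinearMap.range (P i) = Vs i) ∧
    (∀ i, P i ∘ₗ P i = P i) ∧
    (∀ i x y, B (P i x) y = B x (P i y)) ∧
    (∑ i, (a i : ℂ) • P i) = (a₀ : ℂ) • LinearMap.id

/-! Necessity: taking traces in `∑ aᵢ Pᵢ = a₀ I` gives `a₁ + a₂ + a₃ = 2 a₀`, each `Pᵢ` being an
idempotent of rank one. Pairing the identity with a vector `v` of the `i`-th line gives
`(a₀ - aᵢ) ‖v‖² = ∑_{j ≠ i} aⱼ ‖Pⱼ v‖²`, so `aᵢ ≥ a₀` would make `v` orthogonal to the other two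
lines; but any two of the three lines span `ℂ²`, so `v = 0`.

Sufficiency: with `αᵢ = a₀ - aᵢ > 0`, the orthogonal projections onto the lines for the hermitian
form `α₀α₁α₂ ∑ₖ |φₖ|² / αₖ`, where `φₖ` is the coordinate functional vanishing on the `k`-th line,
satisfy the required identity. -/

open ComplexConjugate Module

variable {V : Type*} [AddCommGroup V] [Module ℂ V]

def sesqOfHermitian (B : V → V → ℂ) (hadd : ∀ x y z, B (x + y) z = B x z + B y z)
    (hsmul : ∀ (c : ℂ) x y, B (c • x) y = conj c * B x y)
    (hconj : ∀ x y, B x y = conj (B y x)) : V →ₗ⋆[ℂ] V →ₗ[ℂ] ℂ :=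
  LinearMap.mk₂'ₛₗ _ _ B hadd hsmul
    (fun x y z => by rw [hconj, hadd, map_add, ← hconj, ← hconj])
    (fun c x y => by rw [hconj, hsmul, map_mul, Complex.conj_conj, ← hconj]; rfl)

theorem re_apply_self_eq_sum {ι : Type*} [Fintype ι] (B : V →ₗ⋆[ℂ] V →ₗ[ℂ] ℂ)
    {P : ι → V →ₗ[ℂ] V} (hidem : ∀ i, IsIdempotentElem (P i))
    (hsa : ∀ i x y, B (P i x) y = B x (P i y)) {a₀ : ℝ} {a : ι → ℝ}
    (hsum : ∑ i, (a i : ℂ) • P i = (a₀ : ℂ) • LinearMap.id) (v : V) :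
    a₀ * (B v v).re = ∑ i, a i * (B (P i v) (P i v)).re := by
  have hv : (a₀ : ℂ) • v = ∑ i, (a i : ℂ) • P i v := by
    simpa using (LinearMap.congr_fun hsum v).symm
  have hBP : ∀ i, B (P i v) (P i v) = B v (P i v) := fun i => by
    rw [hsa, ← Module.End.mul_apply, (hidem i).eq]
  have := congrArg Complex.re (congrArg (B v) hv)
  simpa [map_sum, hBP, Complex.re_sum] using this

namespace Unitarizable

variable {n : ℕ} {Vs : Fin n → Submodule ℂ V} {a₀ : ℝ} {a : Fin n → ℝ}

theorem sum_mul_finrank [FiniteDimensional ℂ V] (h : Unitarizable Vs a₀ a) :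
    ∑ i, a i * finrank ℂ (Vs i) = a₀ * finrank ℂ V := by
  obtain ⟨-, P, -, -, -, -, hrange, hidem, -, hsum⟩ := h
  have htrace : ∀ i, LinearMap.trace ℂ V (P i) = finrank ℂ (Vs i) := fun i => by
    rw [← hrange]
    exact (LinearMap.IsIdempotentElem.isProj_range _ (hidem i)).trace
  have := congrArg (LinearMap.trace ℂ V) hsum
  simp only [map_sum, map_smul, LinearMap.trace_id, smul_eq_mul, htrace] at this
  exact_mod_cast this

theorem lt_of_mem_iSup (h : Unitarizable Vs a₀ a) (ha : ∀ i, 0 < a i) {i : Fin n} {v : V}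
    (hvi : v ∈ Vs i) (hv : v ∈ ⨆ (j) (_ : j ≠ i), Vs j) (hv0 : v ≠ 0) : a i < a₀ := by
  obtain ⟨B, P, hadd, hsmul, hconj, hpos, hrange, hidem, hsa, hsum⟩ := h
  set S := sesqOfHermitian B hadd hsmul hconj
  have hidem' : ∀ j, IsIdempotentElem (P j) := hidem
  have hpos' : ∀ x ≠ 0, 0 < (S x x).re := hpos
  have hre_nonneg : ∀ x, 0 ≤ (S x x).re := fun x => by
    rcases eq_or_ne x 0 with rfl | hx
    · simp
    · exact (hpos' x hx).le
  have hPv : P i v = v := (LinearMap.IsIdempotentElem.mem_range_iff (hidem' i)).mp (hrange i ▸ hvi)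
  by_contra! hle
  have hkey := re_apply_self_eq_sum S hidem' hsa hsum v
  rw [← Finset.add_sum_erase _ _ (Finset.mem_univ i), hPv] at hkey
  have hnonneg : ∀ j ∈ Finset.univ.erase i, 0 ≤ a j * (S (P j v) (P j v)).re :=
    fun j _ => mul_nonneg (ha j).le (hre_nonneg _)
  have hrest : ∀ j ∈ Finset.univ.erase i, a j * (S (P j v) (P j v)).re = 0 :=
    (Finset.sum_eq_zero_iff_of_nonneg hnonneg).mp <| le_antisymm
      (by nlinarith [mul_le_mul_of_nonneg_right hle (hre_nonneg v)]) (Finset.sum_nonneg hnonneg)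
  have hvanish : ∀ j ≠ i, P j v = 0 := fun j hj => by
    by_contra hne
    have := hrest j (Finset.mem_erase.mpr ⟨hj, Finset.mem_univ j⟩)
    exact (mul_pos (ha j) (hpos' _ hne)).ne' this
  have hker : (⨆ (j) (_ : j ≠ i), Vs j) ≤ LinearMap.ker (S.flip v) := by
    refine iSup₂_le fun j hj w hw => ?_
    obtain ⟨w, rfl⟩ : w ∈ LinearMap.range (P j) := hrange j ▸ hw
    show B (P j w) v = 0
    rw [hsa, hvanish j hj]
    exact map_zero (S w)
  exact (hpos' v hv0).ne' (by simpa using congrArg Complex.re (hker hv))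

end Unitarizable

section OrthogonalProjection

variable (B : V →ₗ⋆[ℂ] V →ₗ[ℂ] ℂ)

noncomputable def orthoProjLine (u : V) : V →ₗ[ℂ] V := (B u u)⁻¹ • (B u).smulRight u

variable {B}

theorem orthoProjLine_apply (u x : V) : orthoProjLine B u x = (B u x / B u u) • u := by
  simp [orthoProjLine, smul_smul, div_eq_inv_mul]

theorem orthoProjLine_self {u : V} (hu : B u u ≠ 0) : orthoProjLine B u u = u := by
  rw [orthoProjLine_apply, div_self hu, one_smul]

theorem range_orthoProjLine {u : V} (hu : B u u ≠ 0) :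
    LinearMap.range (orthoProjLine B u) = Submodule.span ℂ {u} := by
  refine le_antisymm ?_ <|
    Submodule.span_le.mpr (Set.singleton_subset_iff.mpr ⟨u, orthoProjLine_self hu⟩)
  rintro _ ⟨x, rfl⟩
  rw [orthoProjLine_apply]
  exact Submodule.smul_mem _ _ (Submodule.mem_span_singleton_self u)

theorem isIdempotentElem_orthoProjLine {u : V} (hu : B u u ≠ 0) :
    IsIdempotentElem (orthoProjLine B u) := by
  refine LinearMap.ext fun x => ?_
  rw [Module.End.mul_apply, orthoProjLine_apply u x, map_smul, orthoProjLine_self hu]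

theorem orthoProjLine_apply_left (hB : ∀ x y, B x y = conj (B y x)) (u x y : V) :
    B (orthoProjLine B u x) y = B x (orthoProjLine B u y) := by
  simp only [orthoProjLine_apply, LinearMap.map_smulₛₗ₂, map_smul, smul_eq_mul, map_div₀]
  rw [← hB, ← hB u u, hB x u]
  ring

theorem unitarizable_of_sum_orthoProjLine (hB : ∀ x y, B x y = conj (B y x))
    (hpos : ∀ x ≠ 0, 0 < (B x x).re) {n : ℕ} {u : Fin n → V} (hu : ∀ i, u i ≠ 0) {a₀ : ℝ}
    {a : Fin n → ℝ} (hsum : ∑ i, (a i : ℂ) • orthoProjLine B (u i) = (a₀ : ℂ) • LinearMap.id) :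
    Unitarizable (fun i => Submodule.span ℂ {u i}) a₀ a := by
  have hne : ∀ i, B (u i) (u i) ≠ 0 := fun i h => (hpos _ (hu i)).ne' (by simp [h])
  exact ⟨fun x y => B x y, fun i => orthoProjLine B (u i), B.map_add₂, B.map_smulₛₗ₂, hB, hpos,
    fun i => range_orthoProjLine (hne i), fun i => isIdempotentElem_orthoProjLine (hne i),
    fun i => orthoProjLine_apply_left hB (u i), hsum⟩

end OrthogonalProjection

def brickVec : Fin 3 → Fin 2 → ℂ := ![![1, 0], ![0, 1], ![1, 1]]

theorem brickVec_ne_zero (i : Fin 3) : brickVec i ≠ 0 := by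
  fin_cases i <;> simp [brickVec, funext_iff, Fin.forall_fin_two]

theorem brickVec_mem_iSup (i : Fin 3) :
    brickVec i ∈ ⨆ (j) (_ : j ≠ i), Submodule.span ℂ {brickVec j} := by
  have hmem : ∀ j, j ≠ i → brickVec j ∈ ⨆ (j) (_ : j ≠ i), Submodule.span ℂ {brickVec j} :=
    fun j hj => Submodule.mem_iSup_of_mem j (Submodule.mem_iSup_of_mem hj
      (Submodule.mem_span_singleton_self _))
  fin_cases i
  · convert Submodule.sub_mem _ (hmem 2 (by decide)) (hmem 1 (by decide)) using 1
    simp [brickVec]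
  · convert Submodule.sub_mem _ (hmem 2 (by decide)) (hmem 0 (by decide)) using 1
    simp [brickVec]
  · convert Submodule.add_mem _ (hmem 0 (by decide)) (hmem 1 (by decide)) using 1
    simp [brickVec]

noncomputable def brickForm (α : Fin 3 → ℝ) : (Fin 2 → ℂ) →ₗ⋆[ℂ] (Fin 2 → ℂ) →ₗ[ℂ] ℂ :=
  LinearMap.mk₂'ₛₗ _ _
    (fun x y => (α 1 * α 2 : ℂ) * (conj (x 1) * y 1) + (α 0 * α 2 : ℂ) * (conj (x 0) * y 0)
      + (α 0 * α 1 : ℂ) * (conj (x 0 - x 1) * (y 0 - y 1)))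
    (fun _ _ _ => by simp only [Pi.add_apply, map_add, map_sub]; ring)
    (fun _ _ _ => by simp only [Pi.smul_apply, smul_eq_mul, map_mul, map_sub]; ring)
    (fun _ _ _ => by simp only [Pi.add_apply]; ring)
    (fun _ _ _ => by simp only [Pi.smul_apply, smul_eq_mul, RingHom.id_apply]; ring)

theorem brickForm_apply (α : Fin 3 → ℝ) (x y : Fin 2 → ℂ) :
    brickForm α x y = (α 1 * α 2 : ℂ) * (conj (x 1) * y 1) + (α 0 * α 2 : ℂ) * (conj (x 0) * y 0)
      + (α 0 * α 1 : ℂ) * (conj (x 0 - x 1) * (y 0 - y 1)) := rfl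

theorem brickForm_conj (α : Fin 3 → ℝ) (x y : Fin 2 → ℂ) :
    brickForm α x y = conj (brickForm α y x) := by
  simp only [brickForm_apply, map_add, map_mul, map_sub, Complex.conj_conj, Complex.conj_ofReal]
  ring

theorem brickForm_apply_self (α : Fin 3 → ℝ) (x : Fin 2 → ℂ) :
    brickForm α x x = ((α 1 * α 2 * Complex.normSq (x 1) + α 0 * α 2 * Complex.normSq (x 0)
      + α 0 * α 1 * Complex.normSq (x 0 - x 1) : ℝ) : ℂ) := by
  simp only [brickForm_apply, Complex.ofReal_add, Complex.ofReal_mul,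
    Complex.normSq_eq_conj_mul_self]

theorem brickForm_re_pos {α : Fin 3 → ℝ} (hα : ∀ i, 0 < α i) {x : Fin 2 → ℂ} (hx : x ≠ 0) :
    0 < (brickForm α x x).re := by
  rw [brickForm_apply_self, Complex.ofReal_re]
  have h01 := mul_pos (hα 0) (hα 1)
  have h02 := mul_pos (hα 0) (hα 2)
  have h12 := mul_pos (hα 1) (hα 2)
  have hsq := Complex.normSq_nonneg (x 0 - x 1)
  rcases eq_or_ne (x 0) 0 with h0 | h0
  · have h1 : x 1 ≠ 0 := fun h1 => hx (funext fun i => by fin_cases i <;> assumption)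
    have := Complex.normSq_pos.mpr h1
    nlinarith [Complex.normSq_nonneg (x 0)]
  · have := Complex.normSq_pos.mpr h0
    nlinarith [Complex.normSq_nonneg (x 1)]

theorem sum_smul_orthoProjLine_brickForm {a₀ : ℝ} {a : Fin 3 → ℝ} (hlt : ∀ i, a i < a₀)
    (hsum : 2 * a₀ = a 0 + a 1 + a 2) :
    ∑ i, (a i : ℂ) • orthoProjLine (brickForm (a₀ - a ·)) (brickVec i) =
      (a₀ : ℂ) • LinearMap.id := by
  have ha : ∀ i, (a i : ℂ) ≠ 0 := fun i => by
    have : 0 < a i := by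
      fin_cases i <;> simp only [Fin.zero_eta, Fin.mk_one, Fin.reduceFinMk] <;>
        linarith [hlt 0, hlt 1, hlt 2]
    exact_mod_cast this.ne'
  have hsumC : 2 * (a₀ : ℂ) = a 0 + a 1 + a 2 := by exact_mod_cast hsum
  have hself : ∀ i, brickForm (a₀ - a ·) (brickVec i) (brickVec i) = (a₀ - a i) * a i := fun i => by
    fin_cases i <;>
      simp only [brickVec, brickForm_apply, Fin.isValue, Fin.zero_eta, Fin.mk_one, Fin.reduceFinMk,
        Matrix.cons_val, Matrix.cons_val_zero, Matrix.cons_val_one, Matrix.cons_val_fin_one,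
        Complex.ofReal_sub, map_zero, map_one, map_sub]
    · linear_combination (a₀ - a 0 : ℂ) * hsumC
    · linear_combination (a₀ - a 1 : ℂ) * hsumC
    · linear_combination (a₀ - a 2 : ℂ) * hsumC
  have hα : ∀ i, (a₀ : ℂ) - a i ≠ 0 := fun i => by exact_mod_cast (sub_pos.mpr (hlt i)).ne'
  refine LinearMap.ext fun x => funext fun j => ?_
  simp only [LinearMap.sum_apply, LinearMap.smul_apply, orthoProjLine_apply, hself]
  fin_cases j <;>
    simp only [Fin.sum_univ_three, brickVec, brickForm_apply, Fin.isValue, Fin.zero_eta, Fin.mk_one,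
      Matrix.cons_val, Matrix.cons_val_zero, Matrix.cons_val_one, Matrix.cons_val_fin_one,
      Complex.ofReal_sub, map_zero, map_one, map_sub, Finset.sum_apply, Pi.smul_apply, smul_eq_mul,
      LinearMap.id_coe, id_eq, mul_zero, zero_mul, mul_one, one_mul,
      add_zero, zero_add, sub_zero, zero_sub, sub_self]
  all_goals field_simp [hα, ha]
  · linear_combination x 0 * hsumC
  · linear_combination x 1 * hsumC

/-- the brick triple (ℂ²; ℂ(1,0), ℂ(0,1), ℂ(1,1)) can be
unitarized with character (a₀; a₁, a₂, a₃), all aᵢ > 0, iff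
aᵢ < a₀ for all i and 2a₀ = a₁ + a₂ + a₃. -/
theorem unitarizable_brick_triple
    (a₀ : ℝ) (a : Fin 3 → ℝ) (ha : ∀ i, 0 < a i) :
    Unitarizable
      (![Submodule.span ℂ {![(1 : ℂ), 0]},
         Submodule.span ℂ {![(0 : ℂ), 1]},
         Submodule.span ℂ {![(1 : ℂ), 1]}] : Fin 3 → Submodule ℂ (Fin 2 → ℂ)) a₀ a ↔
    (∀ i, a i < a₀) ∧ 2 * a₀ = a 0 + a 1 + a 2 := by
  have hlines : (![Submodule.span ℂ {![(1 : ℂ), 0]}, Submodule.span ℂ {![(0 : ℂ), 1]},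
      Submodule.span ℂ {![(1 : ℂ), 1]}] : Fin 3 → Submodule ℂ (Fin 2 → ℂ)) =
      fun i => Submodule.span ℂ {brickVec i} := by
    funext i; fin_cases i <;> rfl
  rw [hlines]
  constructor
  · intro h
    refine ⟨fun i => h.lt_of_mem_iSup ha (Submodule.mem_span_singleton_self _)
      (brickVec_mem_iSup i) (brickVec_ne_zero i), ?_⟩
    have hdim := h.sum_mul_finrank
    simp only [finrank_span_singleton (brickVec_ne_zero _), Fin.sum_univ_three,
      Module.finrank_fin_fun] at hdim
    push_cast at hdim
    linarith
  · rintro ⟨hlt, hsum⟩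
    exact unitarizable_of_sum_orthoProjLine (brickForm_conj _)
      (fun _ => brickForm_re_pos fun i => sub_pos.mpr (hlt i)) brickVec_ne_zero
      (sum_smul_orthoProjLine_brickForm hlt hsum)
end

section
/- Let E, Ẽ be finite-dimensional complex vector spaces, A,B linear operators on E and Ã,B̃ on Ẽ. Define the operator quintuple L_{A,B} = (E⊕E; {(x,0) : x∈E}, {(0,x) : x∈E}, {(x,x) : x∈E}, {(x,Ax) : x∈E}, {(x,Bx) : x∈E}), and similarly L_{Ã,B̃}. Then L_{A,B} is isomorphic (as a system of subspaces) to L_{Ã,B̃} if and only if there exists an invertible linear map T : Ẽ → E with à = T⁻¹AT and B̃ = T⁻¹BT. -/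
/-!
An isomorphism of subspace systems preserves the two axes of `E × E`, so it acts as
`(x, y) ↦ (f x, g y)`; preserving the diagonal forces `f = g`. A map of the form `f × f` carries
the graph of `A` to the graph of `f A f⁻¹`, and a linear map is determined by its graph.
-/

/-- The operator quintuple L_{A,B} of subspaces of E ⊕ E. -/
def operatorQuintuple {E : Type*} [AddCommGroup E] [Module ℂ E]
    (A B : E →ₗ[ℂ] E) : Fin 5 → Submodule ℂ (E × E) :=
  ![(⊤ : Submodule ℂ E).prod (⊥ : Submodule ℂ E),
    (⊥ : Submodule ℂ E).prod (⊤ : Submodule ℂ E),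
    LinearMap.graph (LinearMap.id : E →ₗ[ℂ] E),
    LinearMap.graph A,
    LinearMap.graph B]

section

variable {R M M₂ N N₂ : Type*} [Semiring R] [AddCommMonoid M] [Module R M] [AddCommMonoid M₂]
  [Module R M₂] [AddCommMonoid N] [Module R N] [AddCommMonoid N₂] [Module R N₂]

theorem LinearMap.graph_injective : Function.Injective (graph : (M →ₗ[R] M₂) → _) := by
  intro f g h
  ext x
  have hinl : (x, f x) ∈ graph g := h ▸ (mem_graph_iff _ _).2 rfl
  exact (mem_graph_iff _ _).1 hinl

theorem LinearMap.map_graph_prodMap (f : M →ₗ[R] M₂) (e₁ : M ≃ₗ[R] N) (e₂ : M₂ ≃ₗ[R] N₂) :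
    (graph f).map (e₁.toLinearMap.prodMap e₂.toLinearMap) =
      graph (e₂.toLinearMap ∘ₗ f ∘ₗ e₁.symm.toLinearMap) := by
  ext ⟨x, y⟩
  rw [← LinearEquiv.coe_prodCongr, Submodule.map_equiv_eq_comap_symm]
  simp [mem_graph_iff, LinearEquiv.symm_apply_eq]

theorem LinearMap.eq_prodMap_of_map_le (φ : M × M →ₗ[R] N × N)
    (h₁ : ((⊤ : Submodule R M).prod ⊥).map φ ≤ (⊤ : Submodule R N).prod ⊥)
    (h₂ : ((⊥ : Submodule R M).prod ⊤).map φ ≤ (⊥ : Submodule R N).prod ⊤)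
    (hΔ : (graph (id : M →ₗ[R] M)).map φ ≤ graph id) :
    φ = (fst R N N ∘ₗ φ ∘ₗ inl R M M).prodMap (fst R N N ∘ₗ φ ∘ₗ inl R M M) := by
  have hinl : ∀ x, (φ (x, 0)).2 = 0 := fun x ↦
    (Submodule.mem_prod.1 (h₁ (Submodule.mem_map_of_mem (by simp)))).2
  have hinr : ∀ y, (φ (0, y)).1 = 0 := fun y ↦
    (Submodule.mem_prod.1 (h₂ (Submodule.mem_map_of_mem (by simp)))).1
  have hdiag : ∀ y, (φ (0, y)).2 = (φ (y, 0)).1 := by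
    intro y
    have hd := (mem_graph_iff _ _).1
      (hΔ (Submodule.mem_map_of_mem ((mem_graph_iff _ (y, y)).2 rfl)))
    rw [← Prod.fst_add_snd (y, y), map_add] at hd
    simpa [hinl, hinr] using hd
  apply prod_ext <;> ext z <;> simp [hinl, hinr, hdiag]

theorem LinearEquiv.exists_eq_prodCongr_of_map_le (e : (M × M) ≃ₗ[R] (N × N))
    (h₁ : ((⊤ : Submodule R M).prod ⊥).map e.toLinearMap ≤ (⊤ : Submodule R N).prod ⊥)
    (h₂ : ((⊥ : Submodule R M).prod ⊤).map e.toLinearMap ≤ (⊥ : Submodule R N).prod ⊤)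
    (hΔ : (LinearMap.graph (LinearMap.id : M →ₗ[R] M)).map e.toLinearMap ≤
      LinearMap.graph LinearMap.id) :
    ∃ f : M ≃ₗ[R] N, e = f.prodCongr f := by
  set f := LinearMap.fst R N N ∘ₗ e.toLinearMap ∘ₗ LinearMap.inl R M M
  have he : ⇑e = Prod.map f f := by
    rw [← LinearMap.coe_prodMap, ← e.toLinearMap.eq_prodMap_of_map_le h₁ h₂ hΔ]
    rfl
  have hf : Function.Bijective f := (Prod.map_bijective.1 (he ▸ e.bijective)).1
  exact ⟨.ofBijective f hf, DFunLike.coe_injective he⟩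

end

theorem operatorQuintuple_map_prodMap {E E' : Type*} [AddCommGroup E] [Module ℂ E]
    [AddCommGroup E'] [Module ℂ E'] (S : E ≃ₗ[ℂ] E') (A B : E →ₗ[ℂ] E) (i : Fin 5) :
    (operatorQuintuple A B i).map (S.toLinearMap.prodMap S.toLinearMap) =
      operatorQuintuple (S.toLinearMap ∘ₗ A ∘ₗ S.symm.toLinearMap)
        (S.toLinearMap ∘ₗ B ∘ₗ S.symm.toLinearMap) i := by
  fin_cases i <;>
    simp [operatorQuintuple, LinearMap.map_graph_prodMap, LinearMap.prodMap_map_prod]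

theorem operatorQuintuple_iso_iff_general
    (E E' : Type*) [AddCommGroup E] [Module ℂ E]
    [AddCommGroup E'] [Module ℂ E']
    (A B : E →ₗ[ℂ] E) (A' B' : E' →ₗ[ℂ] E') :
    (∃ R : (E × E) ≃ₗ[ℂ] (E' × E'),
        ∀ i, (operatorQuintuple A B i).map R.toLinearMap = operatorQuintuple A' B' i) ↔
    (∃ T : E' ≃ₗ[ℂ] E,
        A' = T.symm.toLinearMap ∘ₗ A ∘ₗ T.toLinearMap ∧
        B' = T.symm.toLinearMap ∘ₗ B ∘ₗ T.toLinearMap) := by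
  constructor
  · rintro ⟨R, hR⟩
    obtain ⟨S, rfl⟩ := R.exists_eq_prodCongr_of_map_le (hR 0).le (hR 1).le (hR 2).le
    have hgraph := fun i ↦ (hR i).symm.trans (operatorQuintuple_map_prodMap S A B i)
    exact ⟨S.symm, LinearMap.graph_injective (hgraph 3), LinearMap.graph_injective (hgraph 4)⟩
  · rintro ⟨T, rfl, rfl⟩
    exact ⟨T.symm.prodCongr T.symm, operatorQuintuple_map_prodMap T.symm A B⟩

/-- L_{A,B} ≅ L_{Ã,B̃} iff (A,B) and (Ã,B̃) are simultaneously
similar. -/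
theorem operatorQuintuple_iso_iff
    (E E' : Type*) [AddCommGroup E] [Module ℂ E] [FiniteDimensional ℂ E]
    [AddCommGroup E'] [Module ℂ E'] [FiniteDimensional ℂ E']
    (A B : E →ₗ[ℂ] E) (A' B' : E' →ₗ[ℂ] E') :
    (∃ R : (E × E) ≃ₗ[ℂ] (E' × E'),
        ∀ i, (operatorQuintuple A B i).map R.toLinearMap = operatorQuintuple A' B' i) ↔
    (∃ T : E' ≃ₗ[ℂ] E,
        A' = T.symm.toLinearMap ∘ₗ A ∘ₗ T.toLinearMap ∧
        B' = T.symm.toLinearMap ∘ₗ B ∘ₗ T.toLinearMap) :=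
  operatorQuintuple_iso_iff_general E E' A B A' B'
end

section
/- Let E be a finite-dimensional complex vector space and A,B linear operators on E. The operator quintuple L_{A,B} = (E⊕E; {(x,0)}, {(0,x)}, {(x,x)}, {(x,Ax)}, {(x,Bx)}) is brick if and only if the pair (A,B) is brick, i.e., every operator T on E with TA = AT and TB = BT is a scalar multiple of the identity. -/
namespace LinearMap

variable {R M N : Type*} [Semiring R] [AddCommMonoid M] [AddCommMonoid N] [Module R M]
  [Module R N]

theorem prodMap_mapsTo_graph_iff (S : M →ₗ[R] M) (T : N →ₗ[R] N) (f : M →ₗ[R] N) :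
    (∀ v ∈ graph f, S.prodMap T v ∈ graph f) ↔ T ∘ₗ f = f ∘ₗ S := by
  simp only [mem_graph_iff, prodMap_apply, Prod.forall]
  constructor
  · intro h
    ext x
    exact h x (f x) rfl
  · rintro h x _ rfl
    exact congr($h x)

theorem prodMap_mapsTo_prod_top_bot (S : M →ₗ[R] M) (T : N →ₗ[R] N) :
    ∀ v ∈ (⊤ : Submodule R M).prod (⊥ : Submodule R N),
      S.prodMap T v ∈ (⊤ : Submodule R M).prod (⊥ : Submodule R N) := by
  simp +contextual [Submodule.mem_prod]

theorem prodMap_mapsTo_prod_bot_top (S : M →ₗ[R] M) (T : N →ₗ[R] N) :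
    ∀ v ∈ (⊥ : Submodule R M).prod (⊤ : Submodule R N),
      S.prodMap T v ∈ (⊥ : Submodule R M).prod (⊤ : Submodule R N) := by
  simp +contextual [Submodule.mem_prod]

theorem eq_prodMap_of_mapsTo_prod_top_bot_of_mapsTo_prod_bot_top (X : M × N →ₗ[R] M × N)
    (h₁ : ∀ v ∈ (⊤ : Submodule R M).prod (⊥ : Submodule R N),
      X v ∈ (⊤ : Submodule R M).prod (⊥ : Submodule R N))
    (h₂ : ∀ v ∈ (⊥ : Submodule R M).prod (⊤ : Submodule R N),
      X v ∈ (⊥ : Submodule R M).prod (⊤ : Submodule R N)) :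
    X = (fst R M N ∘ₗ X ∘ₗ inl R M N).prodMap (snd R M N ∘ₗ X ∘ₗ inr R M N) := by
  simp only [Submodule.mem_prod, Submodule.mem_top, Submodule.mem_bot, true_and, and_true,
    Prod.forall] at h₁ h₂
  refine prod_ext (ext fun x => Prod.ext rfl ?_) (ext fun y => Prod.ext ?_ rfl)
  · simp [h₁ x 0 rfl, h₁ 0 0 rfl]
  · simp [h₂ 0 y rfl, h₂ 0 0 rfl]

theorem prodMap_self_eq_smul_id_iff {R M : Type*} [CommSemiring R] [AddCommMonoid M]
    [Module R M] (T : M →ₗ[R] M) (c : R) :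
    T.prodMap T = c • (id : M × M →ₗ[R] M × M) ↔ T = c • id := by
  refine ⟨fun h => ext fun x => congr(($h (x, 0)).1), fun h => ?_⟩
  rw [h, prodMap_smul, prodMap_id]

end LinearMap

open LinearMap in
theorem mapsTo_operatorQuintuple_iff {E : Type*} [AddCommGroup E] [Module ℂ E]
    (A B : E →ₗ[ℂ] E) (X : (E × E) →ₗ[ℂ] (E × E)) :
    (∀ i, ∀ v ∈ operatorQuintuple A B i, X v ∈ operatorQuintuple A B i) ↔
      ∃ T : E →ₗ[ℂ] E, T ∘ₗ A = A ∘ₗ T ∧ T ∘ₗ B = B ∘ₗ T ∧ X = T.prodMap T := by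
  simp only [Fin.forall_fin_succ, IsEmpty.forall_iff, and_true, operatorQuintuple,
    Matrix.cons_val_zero, Matrix.cons_val_succ]
  constructor
  · rintro ⟨h₁, h₂, hid, hA, hB⟩
    have hX := eq_prodMap_of_mapsTo_prod_top_bot_of_mapsTo_prod_bot_top X h₁ h₂
    set S := fst ℂ E E ∘ₗ X ∘ₗ inl ℂ E E
    set T := snd ℂ E E ∘ₗ X ∘ₗ inr ℂ E E
    rw [hX, prodMap_mapsTo_graph_iff] at hid hA hB
    have hST : S = T := by simpa using hid.symm
    rw [hST] at hX hA hB
    exact ⟨T, hA, hB, hX⟩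
  · rintro ⟨T, hA, hB, rfl⟩
    exact ⟨prodMap_mapsTo_prod_top_bot T T, prodMap_mapsTo_prod_bot_top T T,
      (prodMap_mapsTo_graph_iff T T id).2 rfl, (prodMap_mapsTo_graph_iff T T A).2 hA,
      (prodMap_mapsTo_graph_iff T T B).2 hB⟩

theorem operatorQuintuple_brick_iff_general
    (E : Type*) [AddCommGroup E] [Module ℂ E]
    (A B : E →ₗ[ℂ] E) :
    (∀ X : (E × E) →ₗ[ℂ] (E × E),
        (∀ i, ∀ v ∈ operatorQuintuple A B i, X v ∈ operatorQuintuple A B i) →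
        ∃ c : ℂ, X = c • LinearMap.id) ↔
    (∀ T : E →ₗ[ℂ] E, T ∘ₗ A = A ∘ₗ T → T ∘ₗ B = B ∘ₗ T →
        ∃ c : ℂ, T = c • LinearMap.id) := by
  simp only [mapsTo_operatorQuintuple_iff]
  constructor
  · intro h T hA hB
    obtain ⟨c, hc⟩ := h (T.prodMap T) ⟨T, hA, hB, rfl⟩
    exact ⟨c, (LinearMap.prodMap_self_eq_smul_id_iff T c).1 hc⟩
  · rintro h X ⟨T, hA, hB, rfl⟩
    obtain ⟨c, hc⟩ := h T hA hB
    exact ⟨c, (LinearMap.prodMap_self_eq_smul_id_iff T c).2 hc⟩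

/-- L_{A,B} is brick iff the pair (A,B) is brick. -/
theorem operatorQuintuple_brick_iff
    (E : Type*) [AddCommGroup E] [Module ℂ E] [FiniteDimensional ℂ E]
    (A B : E →ₗ[ℂ] E) :
    (∀ X : (E × E) →ₗ[ℂ] (E × E),
        (∀ i, ∀ v ∈ operatorQuintuple A B i, X v ∈ operatorQuintuple A B i) →
        ∃ c : ℂ, X = c • LinearMap.id) ↔
    (∀ T : E →ₗ[ℂ] E, T ∘ₗ A = A ∘ₗ T → T ∘ₗ B = B ∘ₗ T →
        ∃ c : ℂ, T = c • LinearMap.id) :=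
  operatorQuintuple_brick_iff_general E A B
end

section
/- Let E be a finite-dimensional complex vector space and A,B linear operators on E. The operator quintuple L_{A,B} is indecomposable if and only if the pair (A,B) is indecomposable, i.e., every idempotent T = T² on E with TA = AT and TB = BT equals 0 or I. -/
/-- L_{A,B} is indecomposable iff the pair (A,B) is
indecomposable. -/
theorem operatorQuintuple_indecomposable_iff
    (E : Type*) [AddCommGroup E] [Module ℂ E] [FiniteDimensional ℂ E]
    (A B : E →ₗ[ℂ] E) :
    (∀ R : (E × E) →ₗ[ℂ] (E × E), R ∘ₗ R = R →
        (∀ i, ∀ v ∈ operatorQuintuple A B i, R v ∈ operatorQuintuple A B i) →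
        R = 0 ∨ R = LinearMap.id) ↔
    (∀ T : E →ₗ[ℂ] E, T ∘ₗ T = T → T ∘ₗ A = A ∘ₗ T → T ∘ₗ B = B ∘ₗ T →
        T = 0 ∨ T = LinearMap.id) := by
  constructor
  · intro h T hTT hTA hTB
    have hTAx : ∀ x, T (A x) = A (T x) := fun x => congrFun (congrArg DFunLike.coe hTA) x
    have hTBx : ∀ x, T (B x) = B (T x) := fun x => congrFun (congrArg DFunLike.coe hTB) x
    have hTTx : ∀ x, T (T x) = T x := fun x => congrFun (congrArg DFunLike.coe hTT) x
    have := h (T.prodMap T) (by ext v <;> simp [hTTx])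
      (by
        intro i v hv
        fin_cases i <;>
          simp_all [operatorQuintuple, Submodule.mem_prod, LinearMap.mem_graph_iff,
            hTAx, hTBx])
    rcases this with h0 | h1
    · left
      ext x
      have := congrArg (fun R => (R (x, 0)).1) h0
      simpa using this
    · right
      ext x
      have := congrArg (fun R => (R (x, 0)).1) h1
      simpa using this
  · intro h R hRR hpres
    set T : E →ₗ[ℂ] E := (LinearMap.fst ℂ E E) ∘ₗ R ∘ₗ (LinearMap.inl ℂ E E) with hT
    have h0 : ∀ x : E, (R (x, 0)).2 = 0 := by
      intro x
      have := hpres 0 (x, 0) (by simp [operatorQuintuple, Submodule.mem_prod])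
      simpa [operatorQuintuple, Submodule.mem_prod] using this
    have h1 : ∀ x : E, (R (0, x)).1 = 0 := by
      intro x
      have := hpres 1 (0, x) (by simp [operatorQuintuple, Submodule.mem_prod])
      simpa [operatorQuintuple, Submodule.mem_prod] using this
    have hR0 : ∀ x : E, R (x, 0) = (T x, 0) := by
      intro x
      ext
      · simp [hT]
      · exact h0 x
    have hdiag : ∀ x : E, (R (0, x)).2 = T x := by
      intro x
      have hm := hpres 2 (x, x) (by simp [operatorQuintuple, LinearMap.mem_graph_iff])
      rw [show ((x : E), (x : E)) = (x, 0) + (0, x) by simp] at hm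
      rw [map_add] at hm
      simp only [operatorQuintuple, LinearMap.mem_graph_iff] at hm
      have : (R (x,0)).2 + (R (0,x)).2 = (R (x,0)).1 + (R (0,x)).1 := by
        simpa [Prod.ext_iff] using hm
      rw [h0 x, h1 x, hR0 x] at this
      simpa using this
    have hRval : ∀ v : E × E, R v = (T v.1, T v.2) := by
      intro v
      have : v = (v.1, 0) + (0, v.2) := by simp
      rw [this, map_add, hR0]
      ext
      · simp [h1]
      · simp [hdiag]
    have hTT : T ∘ₗ T = T := by
      ext x
      have h2 := congrFun (congrArg DFunLike.coe hRR) (x, 0)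
      simp only [LinearMap.comp_apply, hRval] at h2
      simpa using congrArg Prod.fst h2
    have hcomm : ∀ (C : E →ₗ[ℂ] E) (i : Fin 5), operatorQuintuple A B i = C.graph →
        T ∘ₗ C = C ∘ₗ T := by
      intro C i hi
      ext x
      have := hpres i (x, C x) (by rw [hi]; simp [LinearMap.mem_graph_iff])
      rw [hi, hRval, LinearMap.mem_graph_iff] at this
      simpa using this
    rcases h T hTT (hcomm A 3 rfl) (hcomm B 4 rfl) with h0' | h1'
    · left
      apply LinearMap.ext
      intro v
      rw [hRval, h0']
      simp
    · right
      apply LinearMap.ext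
      intro v
      rw [hRval, h1']
      rfl
end

section
/- Suppose the quadruple of one-dimensional subspaces (H; H₁, H₂, H₃, H₄) of a two-dimensional complex Hilbert space H satisfies a₁P₁ + a₂P₂ + a₃P₃ + a₄P₄ = a₀I with all aᵢ > 0, dim Hᵢ = 1, and the four subspaces are pairwise distinct with H₁+H₂ = H₁+H₃ = H (i.e., the system is isomorphic to some S_μ). Then 2a₀ = a₁ + a₂ + a₃ + a₄ and 0 < aᵢ < a₀ for all i = 1,2,3,4. -/
/-!
Taking traces: each `Pᵢ` is a rank-one projection, so `trace Pᵢ = 1` and `2 a₀ = Σ aᵢ`.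
For `aᵢ < a₀`, evaluate the quadratic form of the relation at a nonzero `v ∈ Hᵢ`: it reads
`a₀ ‖v‖² = aᵢ ‖v‖² + Σ_{l ≠ i} a_l ‖P_l v‖²`. A line `H_l` with `P_l v = 0` must be `v^⊥`,
and since the lines are pairwise distinct, at most one of the other three can be `v^⊥`, so the
remaining sum is positive.
-/

open Module Submodule

namespace Submodule

variable {𝕜 E : Type*} [RCLike 𝕜] [NormedAddCommGroup E] [InnerProductSpace 𝕜 E]

theorem trace_starProjection [FiniteDimensional 𝕜 E] (K : Submodule 𝕜 E) :
    LinearMap.trace 𝕜 E (K.starProjection : E →ₗ[𝕜] E) = finrank 𝕜 K := by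
  have hPι : (K.orthogonalProjectionOnto : E →ₗ[𝕜] K) ∘ₗ K.subtype = LinearMap.id := by
    ext x
    simp [orthogonalProjectionOnto_mem_subspace_eq_self]
  rw [starProjection, ContinuousLinearMap.toLinearMap_comp, toLinearMap_subtypeL,
    LinearMap.trace_comp_comm', hPι, LinearMap.trace_id]

theorem norm_sq_starProjection_eq_re_inner (K : Submodule 𝕜 E) [K.HasOrthogonalProjection]
    (v : E) : ‖K.starProjection v‖ ^ 2 = RCLike.re (inner 𝕜 v (K.starProjection v)) := by
  rw [← inner_starProjection_left_eq_right, re_inner_starProjection_eq_normSq,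
    starProjection_apply, norm_coe]

theorem eq_orthogonal_span_singleton_of_starProjection_eq_zero [FiniteDimensional 𝕜 E]
    {K : Submodule 𝕜 E} (hK : finrank 𝕜 K + 1 = finrank 𝕜 E) {v : E} (hv : v ≠ 0)
    (hKv : K.starProjection v = 0) : K = (𝕜 ∙ v)ᗮ := by
  have hle : K ≤ (𝕜 ∙ v)ᗮ := by
    rw [← isOrtho_iff_le, isOrtho_comm, isOrtho_iff_le, span_singleton_le_iff_mem]
    exact (starProjection_apply_eq_zero_iff K).mp hKv
  refine eq_of_le_of_finrank_eq hle ?_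
  have := finrank_add_finrank_orthogonal (𝕜 ∙ v)
  rw [finrank_span_singleton hv] at this
  omega

end Submodule

section OrthoscalarRelation

variable {𝕜 E ι : Type*} [RCLike 𝕜] [NormedAddCommGroup E] [InnerProductSpace 𝕜 E] [Fintype ι]
  {K : ι → Submodule 𝕜 E} {a : ι → ℝ} {a₀ : ℝ}

theorem finrank_mul_eq_sum_of_sum_smul_starProjection_eq [FiniteDimensional 𝕜 E]
    (h : ∑ i, (a i : 𝕜) • (K i).starProjection = (a₀ : 𝕜) • ContinuousLinearMap.id 𝕜 E) :
    a₀ * finrank 𝕜 E = ∑ i, a i * finrank 𝕜 (K i) := by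
  have htr := congrArg (fun T : E →L[𝕜] E ↦ LinearMap.trace 𝕜 E (T : E →ₗ[𝕜] E)) h
  simp only [ContinuousLinearMap.toLinearMap_sum, ContinuousLinearMap.toLinearMap_smul,
    map_sum, map_smul, ContinuousLinearMap.coe_id, LinearMap.trace_id, trace_starProjection,
    smul_eq_mul] at htr
  exact_mod_cast htr.symm

theorem sum_mul_norm_sq_starProjection_eq [∀ i, (K i).HasOrthogonalProjection]
    (h : ∑ i, (a i : 𝕜) • (K i).starProjection = (a₀ : 𝕜) • ContinuousLinearMap.id 𝕜 E)
    (v : E) : ∑ i, a i * ‖(K i).starProjection v‖ ^ 2 = a₀ * ‖v‖ ^ 2 := by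
  have hv := congrArg (fun T : E →L[𝕜] E ↦ RCLike.re (inner 𝕜 v (T v))) h
  simpa only [sum_apply, smul_apply, inner_sum, inner_smul_right, map_sum, RCLike.re_ofReal_mul, ContinuousLinearMap.id_apply,
    ← norm_sq_starProjection_eq_re_inner, inner_self_eq_norm_sq] using hv

theorem lt_of_sum_smul_starProjection_eq [∀ i, (K i).HasOrthogonalProjection]
    (h : ∑ i, (a i : 𝕜) • (K i).starProjection = (a₀ : 𝕜) • ContinuousLinearMap.id 𝕜 E)
    (ha : ∀ i, 0 ≤ a i) {i j : ι} (hji : j ≠ i) (hj : 0 < a j) {v : E} (hv : v ∈ K i)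
    (hjv : (K j).starProjection v ≠ 0) : a i < a₀ := by
  classical
  have hsum := sum_mul_norm_sq_starProjection_eq h v
  rw [← Finset.sum_erase_add _ _ (Finset.mem_univ i), starProjection_eq_self_iff.mpr hv] at hsum
  have hpos : 0 < ∑ l ∈ Finset.univ.erase i, a l * ‖(K l).starProjection v‖ ^ 2 :=
    Finset.sum_pos' (fun l _ ↦ mul_nonneg (ha l) (sq_nonneg _))
      ⟨j, Finset.mem_erase.mpr ⟨hji, Finset.mem_univ j⟩,
        mul_pos hj (pow_pos (norm_pos_iff.mpr hjv) 2)⟩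
  nlinarith [sq_nonneg ‖v‖]

end OrthoscalarRelation

theorem character_necessity_nondegenerate_general
    (H : Type*) [NormedAddCommGroup H] [InnerProductSpace ℂ H] [FiniteDimensional ℂ H]
    (hH : Module.finrank ℂ H = 2)
    (Hs : Fin 4 → Submodule ℂ H)
    (hdim : ∀ i, Module.finrank ℂ (Hs i) = 1)
    (hdist : ∀ i j, i ≠ j → Hs i ≠ Hs j)
    (a₀ : ℝ) (a : Fin 4 → ℝ) (ha : ∀ i, 0 < a i)
    (hrel : ∑ i, (a i : ℂ) • ((Hs i).subtypeL ∘L Submodule.orthogonalProjectionOnto (Hs i))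
      = (a₀ : ℂ) • ContinuousLinearMap.id ℂ H) :
    2 * a₀ = a 0 + a 1 + a 2 + a 3 ∧ ∀ i, 0 < a i ∧ a i < a₀ := by
  have hrel' : ∑ i, (a i : ℂ) • (Hs i).starProjection = (a₀ : ℂ) • ContinuousLinearMap.id ℂ H :=
    hrel
  refine ⟨?_, fun i ↦ ⟨ha i, ?_⟩⟩
  · have htrace := finrank_mul_eq_sum_of_sum_smul_starProjection_eq hrel'
    simp only [hH, hdim, Fin.sum_univ_four] at htrace
    push_cast at htrace
    linarith
  obtain ⟨j, k, hji, hki, hjk⟩ : ∃ j k : Fin 4, j ≠ i ∧ k ≠ i ∧ j ≠ k := by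
    revert i; decide
  obtain ⟨v, hv, hv0⟩ := exists_mem_ne_zero_of_ne_bot (one_le_finrank_iff.mp (hdim i).ge)
  have hperp (l : Fin 4) (hl : (Hs l).starProjection v = 0) : Hs l = (ℂ ∙ v)ᗮ :=
    eq_orthogonal_span_singleton_of_starProjection_eq_zero (by rw [hdim, hH]) hv0 hl
  by_cases hj : (Hs j).starProjection v = 0
  · have hk : (Hs k).starProjection v ≠ 0 := fun hk ↦
      hdist j k hjk ((hperp j hj).trans (hperp k hk).symm)
    exact lt_of_sum_smul_starProjection_eq hrel' (fun l ↦ (ha l).le) hki (ha k) hv hk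
  · exact lt_of_sum_smul_starProjection_eq hrel' (fun l ↦ (ha l).le) hji (ha j) hv hj

/-- necessity of the character conditions for nondegenerate
orthoscalar quadruples of lines in a 2-dimensional Hilbert space. -/
theorem character_necessity_nondegenerate
    (H : Type*) [NormedAddCommGroup H] [InnerProductSpace ℂ H] [FiniteDimensional ℂ H]
    (hH : Module.finrank ℂ H = 2)
    (Hs : Fin 4 → Submodule ℂ H)
    (hdim : ∀ i, Module.finrank ℂ (Hs i) = 1)
    (hdist : ∀ i j, i ≠ j → Hs i ≠ Hs j)
    (h12 : Hs 0 ⊔ Hs 1 = ⊤) (h13 : Hs 0 ⊔ Hs 2 = ⊤)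
    (a₀ : ℝ) (a : Fin 4 → ℝ) (ha : ∀ i, 0 < a i)
    (hrel : ∑ i, (a i : ℂ) • ((Hs i).subtypeL ∘L Submodule.orthogonalProjectionOnto (Hs i))
      = (a₀ : ℂ) • ContinuousLinearMap.id ℂ H) :
    2 * a₀ = a 0 + a 1 + a 2 + a 3 ∧ ∀ i, 0 < a i ∧ a i < a₀ :=
  character_necessity_nondegenerate_general H hH Hs hdim hdist a₀ a ha hrel
end

section
/- The degenerate quadruple S₃,₄ = (ℂ²; span(e₁), span(e₂), span(e₁+e₂), span(e₁+e₂)) can be unitarized with character (a₀; a₁,a₂,a₃,a₄) (all aᵢ > 0) if a₁ + a₂ > a₃ + a₄, a₁ < a₂ + a₃ + a₄, a₂ < a₁ + a₃ + a₄, and 2a₀ = a₁ + a₂ + a₃ + a₄. -/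
/-!
Give `ℂ²` the inner product `B x y = x* G y` with Gram matrix `G = [[p, r], [r, q]]`, where
`p = a₁ (a₀ - a₁)`, `q = a₂ (a₀ - a₂)`, `r = -(a₀ - a₁)(a₀ - a₂)` (the paper's `a₁, a₂` are
`a 0, a 1` here). The `B`-orthogonal projection onto `ℂ v` is `v v* G / B(v, v)`, so
`∑ aᵢ Pᵢ = a₀ I` says `∑ aᵢ vᵢ vᵢ* / B(vᵢ, vᵢ) = a₀ G⁻¹`, and `G` solves this equation;
`2 a₀ = ∑ aᵢ` enters through `B(e₁ + e₂, e₁ + e₂) = (a₃ + a₄)(a₁ + a₂ - a₀)`.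
`G` is positive definite since `p > 0` and `pq - r² = a₀ (a₀ - a₁)(a₀ - a₂)(a₁ + a₂ - a₀) > 0`,
and the three inequalities of the hypothesis are exactly the positivity of these factors.
-/

open Matrix ComplexOrder

namespace Matrix

variable {ι : Type*} [Fintype ι] (G : Matrix ι ι ℂ)

def gramForm (x y : ι → ℂ) : ℂ := star x ⬝ᵥ (G *ᵥ y)

lemma gramForm_add_left (x y z : ι → ℂ) :
    G.gramForm (x + y) z = G.gramForm x z + G.gramForm y z := by
  simp [gramForm, add_dotProduct]

lemma gramForm_smul_left (c : ℂ) (x y : ι → ℂ) :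
    G.gramForm (c • x) y = starRingEnd ℂ c * G.gramForm x y := by
  simp [gramForm, star_smul]

lemma gramForm_add_right (x y z : ι → ℂ) :
    G.gramForm x (y + z) = G.gramForm x y + G.gramForm x z := by
  simp [gramForm, mulVec_add, dotProduct_add]

lemma gramForm_smul_right (c : ℂ) (x y : ι → ℂ) :
    G.gramForm x (c • y) = c * G.gramForm x y := by
  simp [gramForm, mulVec_smul]

variable {G}

lemma IsHermitian.gramForm_conj_symm (hG : G.IsHermitian) (x y : ι → ℂ) :
    G.gramForm x y = starRingEnd ℂ (G.gramForm y x) := by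
  rw [gramForm, gramForm, starRingEnd_apply, ← star_dotProduct, star_mulVec, ← dotProduct_mulVec,
    hG.eq]

lemma PosDef.re_gramForm_self_pos (hG : G.PosDef) {x : ι → ℂ} (hx : x ≠ 0) :
    0 < (G.gramForm x x).re :=
  (Complex.lt_def.mp (hG.dotProduct_mulVec_pos hx)).1

lemma PosDef.gramForm_self_ne_zero (hG : G.PosDef) {x : ι → ℂ} (hx : x ≠ 0) :
    G.gramForm x x ≠ 0 := fun h ↦ by
  simpa [h] using hG.re_gramForm_self_pos hx

variable (G) in
noncomputable def lineProj (v : ι → ℂ) : (ι → ℂ) →ₗ[ℂ] (ι → ℂ) where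
  toFun x := (G.gramForm v x / G.gramForm v v) • v
  map_add' x y := by rw [gramForm_add_right, add_div, add_smul]
  map_smul' c x := by rw [gramForm_smul_right, mul_div_assoc, smul_smul]; rfl

@[simp] lemma lineProj_apply (v x : ι → ℂ) :
    G.lineProj v x = (G.gramForm v x / G.gramForm v v) • v := rfl

lemma lineProj_self {v : ι → ℂ} (hv : G.gramForm v v ≠ 0) : G.lineProj v v = v := by
  rw [lineProj_apply, div_self hv, one_smul]

lemma range_lineProj {v : ι → ℂ} (hv : G.gramForm v v ≠ 0) :
    LinearMap.range (G.lineProj v) = Submodule.span ℂ {v} := by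
  refine le_antisymm ?_ ?_
  · rintro _ ⟨x, rfl⟩
    exact Submodule.smul_mem _ _ (Submodule.mem_span_singleton_self v)
  · rw [Submodule.span_le, Set.singleton_subset_iff]
    exact ⟨v, lineProj_self hv⟩

lemma lineProj_comp_self {v : ι → ℂ} (hv : G.gramForm v v ≠ 0) :
    G.lineProj v ∘ₗ G.lineProj v = G.lineProj v := by
  ext1 x
  rw [LinearMap.comp_apply, lineProj_apply (v := v) x, map_smul, lineProj_self hv]

lemma IsHermitian.gramForm_lineProj_symm (hG : G.IsHermitian) (v x y : ι → ℂ) :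
    G.gramForm (G.lineProj v x) y = G.gramForm x (G.lineProj v y) := by
  have hvv : starRingEnd ℂ (G.gramForm v v) = G.gramForm v v := (hG.gramForm_conj_symm v v).symm
  rw [lineProj_apply, lineProj_apply, gramForm_smul_left, gramForm_smul_right, map_div₀, hvv,
    ← hG.gramForm_conj_symm x v]
  ring

lemma PosDef.unitarizable_span_singleton {n : ℕ} (hG : G.PosDef) {v : Fin n → ι → ℂ}
    (hv : ∀ i, v i ≠ 0) {a₀ : ℝ} {a : Fin n → ℝ}
    (hsum : ∑ i, (a i : ℂ) • G.lineProj (v i) = (a₀ : ℂ) • LinearMap.id) :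
    Unitarizable (fun i ↦ Submodule.span ℂ {v i}) a₀ a := by
  have hvv i := hG.gramForm_self_ne_zero (hv i)
  exact ⟨G.gramForm, fun i ↦ G.lineProj (v i), G.gramForm_add_left, G.gramForm_smul_left,
    hG.isHermitian.gramForm_conj_symm, fun _ ↦ hG.re_gramForm_self_pos,
    fun i ↦ range_lineProj (hvv i), fun i ↦ lineProj_comp_self (hvv i),
    fun i ↦ hG.isHermitian.gramForm_lineProj_symm (v i), hsum⟩

lemma gramForm_fin_two (G : Matrix (Fin 2) (Fin 2) ℂ) (x y : Fin 2 → ℂ) :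
    G.gramForm x y = starRingEnd ℂ (x 0) * (G 0 0 * y 0 + G 0 1 * y 1) +
      starRingEnd ℂ (x 1) * (G 1 0 * y 0 + G 1 1 * y 1) := by
  simp [gramForm, dotProduct, mulVec, Fin.sum_univ_two]

lemma posDef_fin_two {p q : ℝ} {r : ℂ} (hp : 0 < p) (hdet : Complex.normSq r < p * q) :
    (!![(p : ℂ), r; star r, q]).PosDef := by
  have hpC : (p : ℂ) ≠ 0 := by exact_mod_cast hp.ne'
  set L : Matrix (Fin 2) (Fin 2) ℂ := !![1, r / p; 0, 1]
  have hLDL : !![(p : ℂ), r; star r, q] =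
      Lᴴ * diagonal ![(p : ℂ), ((q - Complex.normSq r / p : ℝ) : ℂ)] * L := by
    ext i j
    fin_cases i <;> fin_cases j <;>
      simp [L, Matrix.mul_apply, Fin.sum_univ_two, Complex.normSq_eq_conj_mul_self] <;>
      field_simp
    ring
  have hL : Function.Injective L.mulVec := by
    rw [mulVec_injective_iff_isUnit, isUnit_iff_isUnit_det]
    simp [L, det_fin_two]
  have hschur : 0 < q - Complex.normSq r / p := by
    rw [sub_pos, div_lt_iff₀ hp]; linarith
  rw [hLDL]
  refine PosDef.conjTranspose_mul_mul_same ((posDef_diagonal_iff).2 fun i ↦ ?_) hL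
  fin_cases i
  · exact Complex.zero_lt_real.mpr hp
  · exact Complex.zero_lt_real.mpr hschur

end Matrix

def s34Gram (a₀ a₁ a₂ : ℝ) : Matrix (Fin 2) (Fin 2) ℂ :=
  !![a₁ * (a₀ - a₁), -((a₀ - a₁) * (a₀ - a₂)); -((a₀ - a₁) * (a₀ - a₂)), a₂ * (a₀ - a₂)]

lemma posDef_s34Gram {a₀ a₁ a₂ : ℝ} (h₁ : 0 < a₁) (h₁₀ : a₁ < a₀) (h₂₀ : a₂ < a₀)
    (h₀ : a₀ < a₁ + a₂) : (s34Gram a₀ a₁ a₂).PosDef := by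
  have hdet : (-((a₀ - a₁) * (a₀ - a₂))) ^ 2 < a₁ * (a₀ - a₁) * (a₂ * (a₀ - a₂)) := by
    have : 0 < a₀ * (a₀ - a₁) * (a₀ - a₂) * (a₁ + a₂ - a₀) :=
      mul_pos (mul_pos (mul_pos (h₁.trans h₁₀) (sub_pos.2 h₁₀)) (sub_pos.2 h₂₀)) (by linarith)
    linear_combination this
  convert posDef_fin_two (mul_pos h₁ (sub_pos.2 h₁₀)) (r := ((-((a₀ - a₁) * (a₀ - a₂)) : ℝ) : ℂ))
    (by rwa [Complex.normSq_ofReal, ← sq]) using 1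
  simp [s34Gram]

lemma sum_smul_lineProj_s34Gram {a₀ : ℝ} {a : Fin 4 → ℝ} (ha₀ : 0 < a 0) (ha₁ : 0 < a 1)
    (h₀ : a 0 < a₀) (h₁ : a 1 < a₀) (h₀₁ : a₀ < a 0 + a 1)
    (hsum : 2 * a₀ = a 0 + a 1 + a 2 + a 3) :
    ∑ i, (a i : ℂ) • (s34Gram a₀ (a 0) (a 1)).lineProj
      (![![1, 0], ![0, 1], ![1, 1], ![1, 1]] i) = (a₀ : ℂ) • LinearMap.id := by
  set G := s34Gram a₀ (a 0) (a 1)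
  have hx : (a₀ - a 0 : ℂ) ≠ 0 := by exact_mod_cast (sub_pos.2 h₀).ne'
  have hy : (a₀ - a 1 : ℂ) ≠ 0 := by exact_mod_cast (sub_pos.2 h₁).ne'
  have hc : (a 0 + a 1 - a₀ : ℂ) ≠ 0 := by exact_mod_cast (sub_pos.2 h₀₁).ne'
  have h0 : (a 0 : ℂ) ≠ 0 := by exact_mod_cast ha₀.ne'
  have h1 : (a 1 : ℂ) ≠ 0 := by exact_mod_cast ha₁.ne'
  have h23 : (a 2 + a 3 : ℂ) ≠ 0 := by exact_mod_cast (show 0 < a 2 + a 3 by linarith).ne'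
  have hsumC : (2 * a₀ : ℂ) = a 0 + a 1 + a 2 + a 3 := by exact_mod_cast hsum
  refine LinearMap.ext fun x ↦ funext fun j ↦ ?_
  have he₁ : G.gramForm ![1, 0] ![1, 0] = a 0 * (a₀ - a 0) := by
    simp [G, s34Gram, gramForm_fin_two]
  have he₂ : G.gramForm ![0, 1] ![0, 1] = a 1 * (a₀ - a 1) := by
    simp [G, s34Gram, gramForm_fin_two]
  have hw : G.gramForm ![1, 1] ![1, 1] = (a 2 + a 3) * (a 0 + a 1 - a₀) := by
    simp [G, s34Gram, gramForm_fin_two]; linear_combination (a 0 + a 1 - a₀ : ℂ) * hsumC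
  have he₁x : G.gramForm ![1, 0] x = (a₀ - a 0) * (a 0 * x 0 - (a₀ - a 1) * x 1) := by
    simp [G, s34Gram, gramForm_fin_two]; ring
  have he₂x : G.gramForm ![0, 1] x = (a₀ - a 1) * (a 1 * x 1 - (a₀ - a 0) * x 0) := by
    simp [G, s34Gram, gramForm_fin_two]; ring
  have hwx : G.gramForm ![1, 1] x = (a 0 + a 1 - a₀) * ((a₀ - a 0) * x 0 + (a₀ - a 1) * x 1) := by
    simp [G, s34Gram, gramForm_fin_two]; ring
  fin_cases j <;> simp [Fin.sum_univ_four, he₁, he₂, hw, he₁x, he₂x, hwx] <;> field_simp <;> ring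

/-- the degenerate quadruple S₃,₄ can be unitarized with any
character (a₀; a₁,a₂,a₃,a₄), all aᵢ > 0, such that a₁ + a₂ > a₃ + a₄,
a₁ < a₂ + a₃ + a₄, a₂ < a₁ + a₃ + a₄ and 2a₀ = a₁ + a₂ + a₃ + a₄. -/
theorem S34_unitarizable
    (a₀ : ℝ) (a : Fin 4 → ℝ) (ha : ∀ i, 0 < a i)
    (h12 : a 0 + a 1 > a 2 + a 3)
    (h1 : a 0 < a 1 + a 2 + a 3)
    (h2 : a 1 < a 0 + a 2 + a 3)
    (hsum : 2 * a₀ = a 0 + a 1 + a 2 + a 3) :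
    Unitarizable
      (![Submodule.span ℂ {![(1 : ℂ), 0]},
         Submodule.span ℂ {![(0 : ℂ), 1]},
         Submodule.span ℂ {![(1 : ℂ), 1]},
         Submodule.span ℂ {![(1 : ℂ), 1]}] : Fin 4 → Submodule ℂ (Fin 2 → ℂ)) a₀ a := by
  have h₀ : a 0 < a₀ := by linarith
  have h₁ : a 1 < a₀ := by linarith
  have h₀₁ : a₀ < a 0 + a 1 := by linarith
  convert (posDef_s34Gram (ha 0) h₀ h₁ h₀₁).unitarizable_span_singleton (fun i ↦ ?_)
    (sum_smul_lineProj_s34Gram (ha 0) (ha 1) h₀ h₁ h₀₁ hsum) using 1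
  · funext i
    fin_cases i <;> rfl
  · fin_cases i <;> simp
end
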